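/- arXiv:2411.08690 — 3 statements merged into one kernel-verified Lean document; each statement's English description precedes it below -/
import Mathlib

section
/- Let L ⊂ ℝ^N be a lattice with vᵀw ∈ ℤ for all v,w ∈ L, let Γ ⊂ SL_N(ℝ) be a subgroup preserving the lattice 𝓛^∨ = L* ⊕ L* under the action ρ_γ(v,w) = (γv, γ^{-T}w), of finite index in the corresponding integral group. Then for any positive integer n, the set of Γ-orbits { 𝐯 ∈ Γ\𝓛^∨ : vᵀw = n } is finite. -/
/-
Let the rows of `A` be a basis of `L`, with integral Gram matrix `G = A Aᵀ` and `d = det G`.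
In the coordinates `(v, w) ↦ (A v, A⁻ᵀ w)` the lattice `L* ⊕ L*` becomes
`ℤᴺ ⊕ G⁻¹ℤᴺ ⊆ ℤᴺ ⊕ d⁻¹ℤᴺ`, and `ρ` of `A⁻¹ M A` becomes `ρ` of `M`. For `M` in the principal
congruence subgroup `Γ(d)` of `SL_N(ℤ)` the matrix `G M⁻ᵀ G⁻¹ ≡ 1 mod d` is integral, so
`A⁻¹ M A` preserves `L* ⊕ L*`; such elements lie in finitely many cosets `t Γ`. Hence it
suffices that `Γ(d)`, and by finite index `SL_N(ℤ)` itself, has finitely many orbits on the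
integral pairs `(u, z)` with `uᵀz = d n ≠ 0`. Transvections run the Euclidean algorithm on `u`
to make it `a e₀`; then `a z₀ = d n` bounds `a` and `z₀`, and the shears `1 + e₀ cᵀ`, which fix
`e₀`, reduce every other `zₖ` modulo `z₀`.
-/

open Matrix

theorem Subgroup.exists_finset_mul_cover {G : Type*} [Group G] (H : Subgroup G) [H.FiniteIndex] :
    ∃ T : Finset G, ∀ g, ∃ t ∈ T, ∃ h ∈ H, g = t * h := by
  classical
  refine ⟨(Set.finite_range fun q : G ⧸ H => q.out).toFinset, fun g => ?_⟩
  obtain ⟨h, hh⟩ := QuotientGroup.mk_out_eq_mul H g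
  exact ⟨(g : G ⧸ H).out, by simp, h⁻¹, inv_mem h.2, by rw [hh, mul_inv_cancel_right]⟩

theorem exists_finset_reps_of_mul_cover {G X : Type*} [Group G] (ρ : G →* Function.End X)
    {Λ : Set G} (H : Subgroup G) {T : Finset G} (hT : ∀ g ∈ Λ, ∃ t ∈ T, ∃ h ∈ H, g = t * h)
    {S : Set X} {F : Finset X} (hF : ∀ x ∈ S, ∃ g ∈ Λ, ρ g x ∈ F) :
    ∃ F' : Finset X, ∀ x ∈ S, ∃ h ∈ H, ρ h x ∈ F' := by
  classical
  refine ⟨Finset.image₂ (fun t y => ρ t⁻¹ y) T F, fun x hx => ?_⟩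
  obtain ⟨g, hg, hgx⟩ := hF x hx
  obtain ⟨t, ht, h, hh, rfl⟩ := hT g hg
  refine ⟨h, hh, Finset.mem_image₂.2 ⟨t, ht, _, hgx, ?_⟩⟩
  change (ρ t⁻¹ * ρ (t * h)) x = _
  rw [← map_mul, inv_mul_cancel_left]

lemma Matrix.map_mulVec_comp {m n R S : Type*} [Fintype n] [CommRing R] [CommRing S] (f : R →+* S)
    (M : Matrix m n R) (u : n → R) : M.map f *ᵥ (f ∘ u) = f ∘ (M *ᵥ u) :=
  funext fun i => (RingHom.map_mulVec f M u i).symm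

lemma Matrix.mul_one_add_det_smul {n R : Type*} [Fintype n] [DecidableEq n] [CommRing R]
    (G K : Matrix n n R) : G * (1 + G.det • K) = (1 + G * K * G.adjugate) * G := by
  rw [mul_add, add_mul, Matrix.mul_assoc _ G.adjugate, adjugate_mul, mul_smul_comm, mul_one,
    one_mul, Matrix.mul_smul, mul_one]

namespace Matrix.SpecialLinearGroup

variable {n R : Type*} [Fintype n] [DecidableEq n] [CommRing R]

lemma transvection_mulVec {i j : n} (hij : i ≠ j) (c : R) (u : n → R) :
    (transvection hij c : Matrix n n R) *ᵥ u = Function.update u i (u i + c * u j) := by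
  ext k
  rcases eq_or_ne k i with rfl | hk <;> simp [transvection_coe, add_mulVec, single_mulVec, *]

/-- On the coordinates `i, j`: `(a, b) ↦ (a % b + b, b) ↦ (a % b + b, -(a % b))`. -/
lemma exists_mulVec_apply_eq_neg_emod {i j : n} (hij : i ≠ j) (u : n → ℤ) :
    ∃ M : SpecialLinearGroup n ℤ, (M *ᵥ u) j = -(u i % u j) ∧
      ∀ k, k ≠ i → k ≠ j → (M *ᵥ u) k = u k := by
  refine ⟨transvection hij.symm (-1) * transvection hij (1 - u i / u j), ?_, fun k hki hkj => ?_⟩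
  · simp [← mulVec_mulVec, transvection_mulVec, hij.symm, Int.emod_def]
    ring
  · simp [← mulVec_mulVec, transvection_mulVec, Function.update_apply, hki, hkj]

lemma exists_mulVec_apply_eq_zero {i j : n} (hij : i ≠ j) (u : n → ℤ) :
    ∃ M : SpecialLinearGroup n ℤ, (M *ᵥ u) j = 0 ∧
      ∀ k, k ≠ i → k ≠ j → (M *ᵥ u) k = u k := by
  induction h : (u j).natAbs using Nat.strong_induction_on generalizing u with
  | _ b ih =>
  by_cases hu : u j = 0
  · exact ⟨1, by simpa using hu, by simp⟩
  obtain ⟨M, hMj, hMk⟩ := exists_mulVec_apply_eq_neg_emod hij u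
  have hlt : (-(u i % u j)).natAbs < b := by
    have := Int.emod_lt_abs (u i) hu
    have := Int.emod_nonneg (u i) hu
    rw [Int.abs_eq_natAbs] at *
    omega
  obtain ⟨M', hM'j, hM'k⟩ := ih _ (hMj ▸ hlt) _ rfl
  refine ⟨M' * M, by rwa [coe_mul, ← mulVec_mulVec], fun k hki hkj => ?_⟩
  rw [coe_mul, ← mulVec_mulVec, hM'k k hki hkj, hMk k hki hkj]

lemma exists_mulVec_eq_single (i : n) (u : n → ℤ) :
    ∃ (M : SpecialLinearGroup n ℤ) (a : ℤ), M *ᵥ u = Pi.single i a := by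
  suffices ∀ s : Finset n, i ∉ s → ∃ M : SpecialLinearGroup n ℤ, ∀ k ∈ s, (M *ᵥ u) k = 0 by
    obtain ⟨M, hM⟩ := this (Finset.univ.erase i) (by simp)
    refine ⟨M, (M *ᵥ u) i, funext fun k => ?_⟩
    rcases eq_or_ne k i with rfl | hk
    · simp
    · simp [hM k (by simp [hk]), hk]
  intro s
  induction s using Finset.induction_on with
  | empty => exact fun _ => ⟨1, by simp⟩
  | @insert j s hj ih =>
    intro hi
    obtain ⟨M, hM⟩ := ih (fun h => hi (Finset.mem_insert_of_mem h))
    have hij : i ≠ j := by rintro rfl; exact hi (Finset.mem_insert_self i s)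
    obtain ⟨M', hM'j, hM'k⟩ := exists_mulVec_apply_eq_zero hij (↑M *ᵥ u)
    refine ⟨M' * M, fun k hk => ?_⟩
    rw [coe_mul, ← mulVec_mulVec]
    rcases Finset.mem_insert.1 hk with rfl | hk
    · exact hM'j
    · rw [hM'k k (fun h => hi (h ▸ Finset.mem_insert_of_mem hk)) (fun h => hj (h ▸ hk)), hM k hk]

def shear (a c : n → R) (h : c ⬝ᵥ a = 0) : SpecialLinearGroup n R :=
  ⟨1 + vecMulVec a c, by
    rw [vecMulVec_eq Unit, det_one_add_replicateCol_mul_replicateRow, h, add_zero]⟩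

lemma shear_mul_shear_neg (a c : n → R) (h : c ⬝ᵥ a = 0) :
    shear a c h * shear (-a) c (by simp [h]) = 1 :=
  Subtype.ext <| show (1 + vecMulVec a c) * (1 + vecMulVec (-a) c) = 1 by
    simp [add_mul, mul_add, vecMulVec_mul_vecMulVec, h]

lemma exists_toGL_eq_conj (A : GL n R) (g : SpecialLinearGroup n R) :
    ∃ g' : SpecialLinearGroup n R, toGL g' = A⁻¹ * toGL g * A :=
  ⟨⟨↑(A⁻¹ * toGL g * A), by
    rw [Units.val_mul, Units.val_mul, coe_units_inv, det_conj' A.isUnit, coe_GL_coe_matrix, g.2]⟩,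
    Units.ext rfl⟩

variable (n) in
def congruenceSubgroup (d : ℕ) : Subgroup (SpecialLinearGroup n ℤ) :=
  (map (Int.castRingHom (ZMod d))).ker

instance (d : ℕ) [NeZero d] : (congruenceSubgroup n d).FiniteIndex :=
  Subgroup.finiteIndex_ker _

lemma exists_eq_one_add_smul_of_mem_congruenceSubgroup {d : ℤ} {M : SpecialLinearGroup n ℤ}
    (hM : M ∈ congruenceSubgroup n d.natAbs) :
    ∃ K : Matrix n n ℤ, (M : Matrix n n ℤ) = 1 + d • K := by
  have h : ∀ i j, d ∣ M i j - (1 : Matrix n n ℤ) i j := fun i j => by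
    rw [← Int.natAbs_dvd, ← ZMod.intCast_eq_intCast_iff_dvd_sub]
    have := congrArg
      (fun g : SpecialLinearGroup n (ZMod d.natAbs) => (g : Matrix n n (ZMod d.natAbs)) i j) hM
    simpa [one_apply, apply_ite] using this.symm
  choose K hK using h
  exact ⟨of K, by ext i j; simp [← hK]⟩

lemma exists_mul_inv_transpose_eq_mul (G : Matrix n n ℤ) {M : SpecialLinearGroup n ℤ}
    (hM : M ∈ congruenceSubgroup n G.det.natAbs) :
    ∃ Q : Matrix n n ℤ, G * (↑M⁻¹ : Matrix n n ℤ)ᵀ = Q * G := by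
  obtain ⟨K, hK⟩ := exists_eq_one_add_smul_of_mem_congruenceSubgroup (inv_mem hM)
  exact ⟨1 + G * Kᵀ * G.adjugate, by rw [hK, transpose_add, transpose_one, transpose_smul,
    mul_one_add_det_smul]⟩

end Matrix.SpecialLinearGroup

namespace Matrix.GeneralLinearGroup

open Matrix.SpecialLinearGroup

variable {n R : Type*} [Fintype n] [DecidableEq n] [CommRing R]

noncomputable def dualPairAction : GL n R →* Function.End ((n → R) × (n → R)) where
  toFun P p := ((P : Matrix n n R) *ᵥ p.1, (P : Matrix n n R)⁻¹ᵀ *ᵥ p.2)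
  map_one' := funext fun p => by simp; rfl
  map_mul' P Q := funext fun p => by
    simp only [Units.val_mul, Matrix.mul_inv_rev, transpose_mul, ← mulVec_mulVec]; rfl

@[simp]
lemma dualPairAction_apply (P : GL n R) (p : (n → R) × (n → R)) :
    dualPairAction P p = ((P : Matrix n n R) *ᵥ p.1, (P : Matrix n n R)⁻¹ᵀ *ᵥ p.2) := rfl

lemma dualPairAction_mul_apply (P Q : GL n R) (p : (n → R) × (n → R)) :
    dualPairAction (P * Q) p = dualPairAction P (dualPairAction Q p) := by
  rw [map_mul]; rfl

lemma dualPairAction_toGL (g : SpecialLinearGroup n R) (p : (n → R) × (n → R)) :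
    dualPairAction (toGL g) p = (g *ᵥ p.1, (↑g⁻¹ : Matrix n n R)ᵀ *ᵥ p.2) := by
  rw [dualPairAction_apply, ← coe_units_inv, ← map_inv]
  rfl

lemma dotProduct_dualPairAction (P : GL n R) (p : (n → R) × (n → R)) :
    (dualPairAction P p).1 ⬝ᵥ (dualPairAction P p).2 = p.1 ⬝ᵥ p.2 := by
  simp [dotProduct_mulVec, vecMul_transpose, mulVec_mulVec]

lemma dualPairAction_toGL_map {S : Type*} [CommRing S] (f : R →+* S)
    (M : SpecialLinearGroup n R) (p : (n → R) × (n → R)) :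
    dualPairAction (toGL (SpecialLinearGroup.map f M)) (f ∘ p.1, f ∘ p.2) =
      (f ∘ (dualPairAction (toGL M) p).1, f ∘ (dualPairAction (toGL M) p).2) := by
  simp only [dualPairAction_toGL, ← map_inv, map_apply_coe, RingHom.mapMatrix_apply,
    ← transpose_map, map_mulVec_comp]

lemma dualPairAction_shear (a c : n → R) (h : c ⬝ᵥ a = 0) (p : (n → R) × (n → R)) :
    dualPairAction (toGL (shear a c h)) p = (p.1 + (c ⬝ᵥ p.1) • a, p.2 - (a ⬝ᵥ p.2) • c) := by
  rw [dualPairAction_toGL, inv_eq_of_mul_eq_one_right (shear_mul_shear_neg a c h)]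
  simp [shear, add_mulVec, neg_mulVec, vecMulVec_mulVec, sub_eq_add_neg]

lemma exists_dualPairAction_mem_box {m : ℤ} (hm : m ≠ 0) (i : n) (p : (n → ℤ) × (n → ℤ))
    (hp : p.1 ⬝ᵥ p.2 = m) :
    ∃ M : SpecialLinearGroup n ℤ, ∀ k, |(dualPairAction (toGL M) p).1 k| ≤ |m| ∧
      |(dualPairAction (toGL M) p).2 k| ≤ |m| := by
  obtain ⟨M, a, hM⟩ := exists_mulVec_eq_single i p.1
  set z := (↑M⁻¹ : Matrix n n ℤ)ᵀ *ᵥ p.2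
  have hMp : dualPairAction (toGL M) p = (Pi.single i a, z) := by rw [dualPairAction_toGL, hM]
  have haz : a * z i = m := by
    rw [← hp, ← dotProduct_dualPairAction (toGL M) p, hMp, single_dotProduct]
  have hzi : z i ≠ 0 := right_ne_zero_of_mul (haz ▸ hm)
  have habs {b c : ℤ} (h : b * c = m) : |b| ≤ |m| :=
    Int.le_of_dvd (abs_pos.2 hm) ((abs_dvd_abs _ _).2 ⟨c, h.symm⟩)
  let c : n → ℤ := fun k => if k = i then 0 else z k / z i
  have hc : c ⬝ᵥ Pi.single i 1 = 0 := by simp [c]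
  refine ⟨shear (Pi.single i 1) c hc * M, fun k => ?_⟩
  rw [map_mul, dualPairAction_mul_apply, hMp, dualPairAction_shear]
  rcases eq_or_ne k i with rfl | hk
  · simpa [c] using ⟨habs haz, habs ((mul_comm _ _).trans haz)⟩
  · simp [c, hk, dotProduct_single, ← Int.emod_def, abs_of_nonneg (Int.emod_nonneg _ hzi)]
    exact (Int.emod_lt_abs _ hzi).le.trans (habs ((mul_comm _ _).trans haz))

lemma exists_finset_dualPairAction_reps {m : ℤ} (hm : m ≠ 0) :
    ∃ F : Finset ((n → ℤ) × (n → ℤ)), ∀ p : (n → ℤ) × (n → ℤ), p.1 ⬝ᵥ p.2 = m →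
      ∃ M : SpecialLinearGroup n ℤ, dualPairAction (toGL M) p ∈ F := by
  let box := Fintype.piFinset fun _ : n => Finset.Icc (-|m|) |m|
  refine ⟨box ×ˢ box, fun p hp => ?_⟩
  cases isEmpty_or_nonempty n
  · exact absurd (by simpa [dotProduct] using hp.symm) hm
  obtain ⟨M, hM⟩ := exists_dualPairAction_mem_box hm (Classical.arbitrary n) p hp
  exact ⟨M, by simpa [box, ← abs_le] using ⟨fun k => (hM k).1, fun k => (hM k).2⟩⟩

lemma exists_finset_dualPairAction_congruenceSubgroup_reps {d : ℕ} (hd : d ≠ 0) {m : ℤ}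
    (hm : m ≠ 0) :
    ∃ F : Finset ((n → ℤ) × (n → ℤ)), ∀ p : (n → ℤ) × (n → ℤ), p.1 ⬝ᵥ p.2 = m →
      ∃ M ∈ congruenceSubgroup n d, dualPairAction (toGL M) p ∈ F := by
  have : NeZero d := ⟨hd⟩
  obtain ⟨T, hT⟩ := (congruenceSubgroup n d).exists_finset_mul_cover
  obtain ⟨F, hF⟩ := exists_finset_dualPairAction_reps (n := n) hm
  simpa using exists_finset_reps_of_mul_cover (dualPairAction.comp toGL) (Λ := Set.univ)
    (congruenceSubgroup n d) (fun g _ => hT g) (S := {p | p.1 ⬝ᵥ p.2 = m})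
    (fun p hp => by simpa using hF p hp)

section CommRing

variable {K : Type*} [CommRing K]

variable (n K) in
def intVectors : Set (n → K) := Set.range fun u : n → ℤ => Int.castRingHom K ∘ u

/-- With a basis of `L` as the rows of `A`, this is `L* = {x | ∀ i, Aᵢ ⬝ᵥ x ∈ ℤ}`. -/
def dualLattice (A : GL n K) : Set (n → K) := {x | (A : Matrix n n K) *ᵥ x ∈ intVectors n K}

variable (K) in
/-- The image of `L* ⊕ L*` under `dualPairAction A` when `G = A Aᵀ`
(see `dualPairAction_mem_dualPairLattice_iff`). -/
def dualPairLattice (G : Matrix n n ℤ) : Set ((n → K) × (n → K)) :=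
  intVectors n K ×ˢ {b | G.map (Int.castRingHom K) *ᵥ b ∈ intVectors n K}

lemma mem_dualLattice_iff (A : GL n K) (x : n → K) :
    x ∈ dualLattice A ↔ ∀ i, ∃ k : ℤ, x ⬝ᵥ (A : Matrix n n K) i = k := by
  refine ⟨fun ⟨y, hy⟩ i => ⟨y i, ?_⟩, fun h => ?_⟩
  · rw [dotProduct_comm]
    exact (congrFun hy i).symm
  · choose y hy using h
    exact ⟨y, funext fun i => by simp [hy, mulVec, dotProduct_comm]⟩

lemma mapsTo_dualPairAction_congruenceSubgroup (G : Matrix n n ℤ) {M : SpecialLinearGroup n ℤ}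
    (hM : M ∈ congruenceSubgroup n G.det.natAbs) :
    Set.MapsTo (dualPairAction (toGL (M : SpecialLinearGroup n K))) (dualPairLattice K G)
      (dualPairLattice K G) := by
  rintro ⟨a, b⟩ ⟨⟨u, rfl⟩, y, hy⟩
  obtain ⟨Q, hQ⟩ := exists_mul_inv_transpose_eq_mul G hM
  refine ⟨⟨M *ᵥ u, ?_⟩, Q *ᵥ y, ?_⟩
  · simp only [dualPairAction_toGL, coe_matrix_coe, map_mulVec_comp]
  · dsimp only at hy
    simp only [dualPairAction_toGL, ← map_inv, coe_matrix_coe, ← transpose_map]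
    rw [mulVec_mulVec, ← Matrix.map_mul, hQ, Matrix.map_mul, ← mulVec_mulVec, ← hy,
      map_mulVec_comp]

lemma dualPairAction_mem_dualPairLattice_iff (A : GL n K) {G : Matrix n n ℤ}
    (hG : G.map (Int.castRingHom K) = A * (A : Matrix n n K)ᵀ) (p : (n → K) × (n → K)) :
    dualPairAction A p ∈ dualPairLattice K G ↔ p ∈ dualLattice A ×ˢ dualLattice A := by
  have hGA : G.map (Int.castRingHom K) * (A : Matrix n n K)⁻¹ᵀ = A := by
    rw [hG, Matrix.mul_assoc, ← transpose_mul, ← coe_units_inv, Units.inv_mul, transpose_one,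
      Matrix.mul_one]
  simp only [dualPairLattice, dualLattice, Set.mem_prod, Set.mem_ofPred_eq, dualPairAction_apply,
    mulVec_mulVec, hGA]

end CommRing

section Field

variable {K : Type*} [Field K] [CharZero K]

lemma exists_finset_dualPairLattice_reps {G : Matrix n n ℤ}
    (hG : G.det ≠ 0) {m : ℤ} (hm : m ≠ 0) :
    ∃ F : Finset ((n → K) × (n → K)), ∀ q ∈ dualPairLattice K G, q.1 ⬝ᵥ q.2 = m →
      ∃ M ∈ congruenceSubgroup n G.det.natAbs,
        dualPairAction (toGL (M : SpecialLinearGroup n K)) q ∈ F := by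
  classical
  set d := G.det
  have hdK : (d : K) ≠ 0 := Int.cast_ne_zero.2 hG
  obtain ⟨E, hE⟩ := exists_finset_dualPairAction_congruenceSubgroup_reps (n := n)
    (Int.natAbs_ne_zero.2 hG) (mul_ne_zero hG hm)
  let embed : (n → ℤ) × (n → ℤ) → (n → K) × (n → K) :=
    fun r => (Int.castRingHom K ∘ r.1, (d : K)⁻¹ • (Int.castRingHom K ∘ r.2))
  refine ⟨E.image embed, ?_⟩
  rintro ⟨_, b⟩ ⟨⟨u, rfl⟩, y, hy⟩ hq
  dsimp only at hy hq
  -- `adjugate G` inverts `G` up to the factor `d`, so `b` has the integral numerator `z`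
  set z := G.adjugate *ᵥ y
  have hb : b = (d : K)⁻¹ • (Int.castRingHom K ∘ z) := by
    have hadj : G.adjugate.map (Int.castRingHom K) = (G.map (Int.castRingHom K)).adjugate :=
      RingHom.map_adjugate _ _
    have hdet : (G.map (Int.castRingHom K)).det = d := (RingHom.map_det _ _).symm
    rw [← map_mulVec_comp, hy, mulVec_mulVec, hadj, adjugate_mul, hdet, smul_mulVec, one_mulVec,
      smul_smul, inv_mul_cancel₀ hdK, one_smul]
  have huz : u ⬝ᵥ z = d * m := by
    apply Int.cast_injective (α := K)
    rw [hb, dotProduct_smul, smul_eq_mul, ← RingHom.map_dotProduct,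
      inv_mul_eq_iff_eq_mul₀ hdK] at hq
    simpa using hq
  obtain ⟨M, hM, hME⟩ := hE (u, z) huz
  refine ⟨M, hM, Finset.mem_image.2 ⟨_, hME, ?_⟩⟩
  obtain ⟨h₁, h₂⟩ := Prod.ext_iff.1 (dualPairAction_toGL_map (Int.castRingHom K) M (u, z))
  subst hb
  exact Prod.ext h₁.symm (by simp only [embed, dualPairAction_apply, mulVec_smul] at h₂ ⊢; rw [h₂])

lemma exists_finset_dualLattice_reps (A : GL n K)
    {G : Matrix n n ℤ} (hG : G.map (Int.castRingHom K) = A * (A : Matrix n n K)ᵀ) {m : ℤ}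
    (hm : m ≠ 0) :
    ∃ F : Finset ((n → K) × (n → K)), ∀ p ∈ dualLattice A ×ˢ dualLattice A, p.1 ⬝ᵥ p.2 = m →
      ∃ g : SpecialLinearGroup n K, Set.MapsTo (dualPairAction (toGL g))
        (dualLattice A ×ˢ dualLattice A) (dualLattice A ×ˢ dualLattice A) ∧
        dualPairAction (toGL g) p ∈ F := by
  classical
  have hGdet : G.det ≠ 0 := by
    have := congrArg Matrix.det hG
    rw [← RingHom.mapMatrix_apply, ← RingHom.map_det, det_mul, det_transpose] at this
    exact fun h => A.det_ne_zero (mul_self_eq_zero.1 (by simpa [h] using this.symm))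
  obtain ⟨F, hF⟩ := exists_finset_dualPairLattice_reps (K := K) hGdet hm
  refine ⟨F.image (dualPairAction A⁻¹), fun p hp hpm => ?_⟩
  obtain ⟨M, hM, hMF⟩ := hF _ ((dualPairAction_mem_dualPairLattice_iff A hG p).2 hp)
    (by rwa [dotProduct_dualPairAction])
  obtain ⟨g, hg⟩ := exists_toGL_eq_conj A (M : SpecialLinearGroup n K)
  have hρg (x) : dualPairAction (toGL g) x = dualPairAction A⁻¹
      (dualPairAction (toGL (M : SpecialLinearGroup n K)) (dualPairAction A x)) := by
    rw [hg, dualPairAction_mul_apply, dualPairAction_mul_apply]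
  refine ⟨g, fun x hx => ?_, Finset.mem_image.2 ⟨_, hMF, (hρg p).symm⟩⟩
  rw [hρg, ← dualPairAction_mem_dualPairLattice_iff A hG, ← dualPairAction_mul_apply,
    mul_inv_cancel, map_one]
  exact mapsTo_dualPairAction_congruenceSubgroup G hM
    ((dualPairAction_mem_dualPairLattice_iff A hG x).2 hx)

end Field

end Matrix.GeneralLinearGroup

open Matrix.GeneralLinearGroup Matrix.SpecialLinearGroup in
theorem finitely_many_orbits_general (N : ℕ) (α : Fin N → (Fin N → ℝ))
    (hα : LinearIndependent ℝ α)
    (hint : ∀ i j, ∃ k : ℤ, α i ⬝ᵥ α j = (k : ℝ))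
    (Lstar : Set (Fin N → ℝ))
    (hLstar : Lstar = {x | ∀ i, ∃ k : ℤ, x ⬝ᵥ α i = (k : ℝ)})
    (Γ : Subgroup (Matrix.SpecialLinearGroup (Fin N) ℝ))
    (hfin : ∃ T : Finset (Matrix.SpecialLinearGroup (Fin N) ℝ),
      ∀ γ : Matrix.SpecialLinearGroup (Fin N) ℝ,
        (∀ v ∈ Lstar, ∀ w ∈ Lstar,
          (γ : Matrix (Fin N) (Fin N) ℝ).mulVec v ∈ Lstar ∧
          ((γ : Matrix (Fin N) (Fin N) ℝ)⁻¹)ᵀ.mulVec w ∈ Lstar) →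
        ∃ t ∈ T, ∃ δ ∈ Γ, γ = t * δ)
    (n : ℕ) (hn : 0 < n) :
    ∃ F : Finset ((Fin N → ℝ) × (Fin N → ℝ)),
      ∀ v ∈ Lstar, ∀ w ∈ Lstar, v ⬝ᵥ w = (n : ℝ) →
        ∃ q ∈ F, ∃ γ ∈ Γ,
          q.1 = (γ : Matrix (Fin N) (Fin N) ℝ).mulVec v ∧
          q.2 = ((γ : Matrix (Fin N) (Fin N) ℝ)⁻¹)ᵀ.mulVec w := by
  obtain ⟨T, hT⟩ := hfin
  set A := (linearIndependent_rows_iff_isUnit.1 hα).unit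
  have hA : (A : Matrix (Fin N) (Fin N) ℝ) = of α := IsUnit.unit_spec _
  have hL : Lstar = dualLattice A := by
    ext x
    rw [mem_dualLattice_iff, hA, hLstar]
    rfl
  obtain ⟨G, hG⟩ : ∃ G : Matrix (Fin N) (Fin N) ℤ,
      G.map (Int.castRingHom ℝ) = A * (A : Matrix (Fin N) (Fin N) ℝ)ᵀ := by
    choose G hG using hint
    exact ⟨of G, by ext i j; simp [hA, ← hG, mul_apply, dotProduct]⟩
  subst hL
  obtain ⟨F, hF⟩ := exists_finset_dualLattice_reps A hG (m := n) (by positivity)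
  obtain ⟨F', hF'⟩ := exists_finset_reps_of_mul_cover (dualPairAction.comp toGL) Γ
    (Λ := {g | Set.MapsTo (dualPairAction (toGL g)) (dualLattice A ×ˢ dualLattice A)
      (dualLattice A ×ˢ dualLattice A)})
    (fun g hg => hT g fun v hv w hw => @hg (v, w) ⟨hv, hw⟩)
    (S := {p | p ∈ dualLattice A ×ˢ dualLattice A ∧ p.1 ⬝ᵥ p.2 = (n : ℤ)})
    (fun p hp => by simpa using hF p hp.1 hp.2)
  refine ⟨F', fun v hv w hw hvw => ?_⟩
  obtain ⟨γ, hγ, hγF⟩ := hF' (v, w) ⟨⟨hv, hw⟩, by simpa using hvw⟩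
  exact ⟨_, hγF, γ, hγ, rfl, rfl⟩

/-- Finiteness of the set of `Γ`-orbits of vectors `𝐯 = (v,w) ∈ L* ⊕ L*` with
`vᵀw = n > 0`, for `Γ ⊂ SL_N(ℝ)` preserving `L* ⊕ L*` under
`ρ_γ(v,w) = (γv, γ^{-T}w)` and of finite index in the full group of such
elements. -/
theorem finitely_many_orbits (N : ℕ) (α : Fin N → (Fin N → ℝ))
    (hα : LinearIndependent ℝ α)
    (hint : ∀ i j, ∃ k : ℤ, α i ⬝ᵥ α j = (k : ℝ))
    (Lstar : Set (Fin N → ℝ))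
    (hLstar : Lstar = {x | ∀ i, ∃ k : ℤ, x ⬝ᵥ α i = (k : ℝ)})
    (Γ : Subgroup (Matrix.SpecialLinearGroup (Fin N) ℝ))
    (hpres : ∀ γ ∈ Γ, ∀ v ∈ Lstar, ∀ w ∈ Lstar,
      (γ : Matrix (Fin N) (Fin N) ℝ).mulVec v ∈ Lstar ∧
      ((γ : Matrix (Fin N) (Fin N) ℝ)⁻¹)ᵀ.mulVec w ∈ Lstar)
    (hfin : ∃ T : Finset (Matrix.SpecialLinearGroup (Fin N) ℝ),
      ∀ γ : Matrix.SpecialLinearGroup (Fin N) ℝ,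
        (∀ v ∈ Lstar, ∀ w ∈ Lstar,
          (γ : Matrix (Fin N) (Fin N) ℝ).mulVec v ∈ Lstar ∧
          ((γ : Matrix (Fin N) (Fin N) ℝ)⁻¹)ᵀ.mulVec w ∈ Lstar) →
        ∃ t ∈ T, ∃ δ ∈ Γ, γ = t * δ)
    (n : ℕ) (hn : 0 < n) :
    ∃ F : Finset ((Fin N → ℝ) × (Fin N → ℝ)),
      ∀ v ∈ Lstar, ∀ w ∈ Lstar, v ⬝ᵥ w = (n : ℝ) →
        ∃ q ∈ F, ∃ γ ∈ Γ,
          q.1 = (γ : Matrix (Fin N) (Fin N) ℝ).mulVec v ∧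
          q.2 = ((γ : Matrix (Fin N) (Fin N) ℝ)⁻¹)ᵀ.mulVec w :=
  finitely_many_orbits_general N α hα hint Lstar hLstar Γ hfin n hn
end

section
/- For d ∈ ℕ, the partial Fourier transform in y of the function (x,y) ↦ H_d(√π(x+y)) e^{-πx² - πy²}, namely ∫_ℝ H_d(√π(x+y)) e^{-πx² - πy²} e^{2πi y y'} dy, equals i^d 2^d π^{d/2} \overline{(ix + y')}^d e^{-πx² - π(y')²}. -/
open Polynomial MeasureTheory Filter Complex

/-- The physicists' Hermite polynomials, `H_d(t) = (2t - d/dt)^d · 1`. -/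
noncomputable def hermiteP : ℕ → Polynomial ℝ
  | 0 => 1
  | n + 1 => 2 * Polynomial.X * hermiteP n - Polynomial.derivative (hermiteP n)



lemma aux_pow_le (n : ℕ) {x : ℝ} (hx : 0 ≤ x) : x ^ n ≤ n.factorial * Real.exp x := by
  have h1 : x ^ n / n.factorial ≤ ∑ i ∈ Finset.range (n + 1), x ^ i / i.factorial := by
    exact Finset.single_le_sum (f := fun i => x ^ i / (i.factorial : ℝ))
      (fun i _ => by positivity) (Finset.self_mem_range_succ n)
  have h2 := Real.sum_le_exp_of_nonneg hx (n + 1)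
  have hn : (0:ℝ) < n.factorial := by positivity
  calc x ^ n = n.factorial * (x ^ n / n.factorial) := by field_simp
    _ ≤ n.factorial * Real.exp x := by
        apply mul_le_mul_of_nonneg_left (h1.trans h2) hn.le

lemma aux_bound (k : ℕ) (c : ℝ) :
    ∃ g : ℝ → ℝ, Integrable g ∧ ∀ y : ℝ, |y| ^ k * Real.exp (-(y - c) ^ 2) ≤ g y := by
  refine ⟨fun y => k.factorial * (Real.exp (c + 1/4) * Real.exp (-(y - (c + 1/2)) ^ 2)
      + Real.exp (1/4 - c) * Real.exp (-(y - (c - 1/2)) ^ 2)), ?_, ?_⟩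
  · have hb : Integrable (fun y : ℝ => Real.exp (-y ^ 2)) := by
      simpa using integrable_exp_neg_mul_sq (b := 1) one_pos
    exact (((hb.comp_sub_right (c + 1/2)).const_mul _).add
      ((hb.comp_sub_right (c - 1/2)).const_mul _)).const_mul _
  · intro y
    have h1 : |y| ^ k ≤ k.factorial * Real.exp |y| := aux_pow_le k (abs_nonneg y)
    have h2 : Real.exp |y| ≤ Real.exp y + Real.exp (-y) := by
      rcases abs_cases y with ⟨h, _⟩ | ⟨h, _⟩ <;> rw [h] <;>
        nlinarith [Real.exp_pos y, Real.exp_pos (-y)]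
    have key : |y| ^ k * Real.exp (-(y - c) ^ 2)
        ≤ k.factorial * ((Real.exp y + Real.exp (-y)) * Real.exp (-(y - c) ^ 2)) := by
      have := mul_le_mul_of_nonneg_right (h1.trans (by
        exact mul_le_mul_of_nonneg_left h2 (by positivity))) (Real.exp_pos (-(y - c) ^ 2)).le
      linarith [this]
    refine key.trans (le_of_eq ?_)
    have e1 : Real.exp y * Real.exp (-(y - c) ^ 2)
        = Real.exp (c + 1/4) * Real.exp (-(y - (c + 1/2)) ^ 2) := by
      rw [← Real.exp_add, ← Real.exp_add]; congr 1; ring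
    have e2 : Real.exp (-y) * Real.exp (-(y - c) ^ 2)
        = Real.exp (1/4 - c) * Real.exp (-(y - (c - 1/2)) ^ 2) := by
      rw [← Real.exp_add, ← Real.exp_add]; congr 1; ring
    rw [add_mul, e1, e2]

lemma aux_norm (r : ℝ) (a : ℂ) (y : ℝ) :
    ‖(r : ℂ) * Complex.exp (-((y:ℂ) - a) ^ 2)‖
      = |r| * (Real.exp (-(y - a.re) ^ 2) * Real.exp (a.im ^ 2)) := by
  rw [norm_mul, Complex.norm_real, Real.norm_eq_abs, Complex.norm_exp,
    ← Real.exp_add]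
  congr 2
  simp [pow_two, Complex.mul_re, Complex.sub_re, Complex.sub_im, Complex.ofReal_re,
    Complex.ofReal_im, Complex.neg_re]
  ring

lemma aux_integrable_pow (k : ℕ) (a : ℂ) :
    Integrable fun y : ℝ => (y:ℂ) ^ k * Complex.exp (-((y:ℂ) - a) ^ 2) := by
  obtain ⟨g, hg, hbound⟩ := aux_bound k a.re
  refine Integrable.mono' (hg.const_mul (Real.exp (a.im ^ 2))) ?_ (Eventually.of_forall fun y => ?_)
  · apply Continuous.aestronglyMeasurable
    exact (Complex.continuous_ofReal.pow k).mul (Complex.continuous_exp.comp (by continuity))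
  · have h1 : (y:ℂ) ^ k * Complex.exp (-((y:ℂ) - a) ^ 2)
        = ((y ^ k : ℝ) : ℂ) * Complex.exp (-((y:ℂ) - a) ^ 2) := by push_cast; ring
    rw [h1, aux_norm, _root_.abs_pow]
    have h2 := mul_le_mul_of_nonneg_right (hbound y) (Real.exp_pos (a.im ^ 2)).le
    calc |y| ^ k * (Real.exp (-(y - a.re) ^ 2) * Real.exp (a.im ^ 2))
        = |y| ^ k * Real.exp (-(y - a.re) ^ 2) * Real.exp (a.im ^ 2) := by ring
      _ ≤ g y * Real.exp (a.im ^ 2) := h2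
      _ = Real.exp (a.im ^ 2) * g y := by ring

lemma aux_integrable (P : ℝ[X]) (a : ℂ) :
    Integrable fun y : ℝ => ((P.eval y : ℝ) : ℂ) * Complex.exp (-((y:ℂ) - a) ^ 2) := by
  have h : (fun y : ℝ => ((P.eval y : ℝ) : ℂ) * Complex.exp (-((y:ℂ) - a) ^ 2))
      = fun y : ℝ => ∑ k ∈ Finset.range (P.natDegree + 1),
          (P.coeff k : ℂ) * ((y:ℂ) ^ k * Complex.exp (-((y:ℂ) - a) ^ 2)) := by
    funext y
    rw [Polynomial.eval_eq_sum_range]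
    push_cast
    rw [Finset.sum_mul]
    exact Finset.sum_congr rfl fun k _ => by ring
  rw [h]
  exact integrable_finset_sum _ fun k _ => (aux_integrable_pow k a).const_mul _

lemma aux_tendsto_core (Q : ℝ[X]) :
    Tendsto (fun u : ℝ => Q.eval u * Real.exp (-u ^ 2)) atTop (nhds 0) := by
  have h : (fun u : ℝ => Q.eval u * Real.exp (-u ^ 2))
      = fun u => (Q.eval u / Real.exp u) * Real.exp (u - u ^ 2) := by
    funext u
    rw [div_mul_eq_mul_div, mul_div_assoc, ← Real.exp_sub]
    congr 2
    ring
  rw [h]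
  have h2 : Tendsto (fun u : ℝ => u - u ^ 2) atTop atBot :=
    tendsto_atBot_mono (fun u => by nlinarith [sq_nonneg (u - 1)])
      (tendsto_atBot_add_const_right atTop 2 tendsto_neg_atTop_atBot)
  simpa using Q.tendsto_div_exp_atTop.mul (Real.tendsto_exp_atBot.comp h2)

lemma aux_tendsto_real (P : ℝ[X]) (c : ℝ) :
    Tendsto (fun y : ℝ => P.eval y * Real.exp (-(y - c) ^ 2)) atTop (nhds 0) := by
  have heq : (fun y : ℝ => P.eval y * Real.exp (-(y - c) ^ 2))
      = (fun u : ℝ => (P.comp (X + C c)).eval u * Real.exp (-u ^ 2)) ∘ (fun y => y + -c) := by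
    funext y
    simp [Function.comp, Polynomial.eval_comp, sub_eq_add_neg]
  rw [heq]
  exact (aux_tendsto_core _).comp (tendsto_atTop_add_const_right atTop (-c) tendsto_id)

lemma aux_tendsto_real_bot (P : ℝ[X]) (c : ℝ) :
    Tendsto (fun y : ℝ => P.eval y * Real.exp (-(y - c) ^ 2)) atBot (nhds 0) := by
  have heq : (fun y : ℝ => P.eval y * Real.exp (-(y - c) ^ 2))
      = (fun u : ℝ => (P.comp (-X)).eval u * Real.exp (-(u - -c) ^ 2)) ∘ (fun y : ℝ => -y) := by
    funext y
    simp only [Function.comp_apply, Polynomial.eval_comp, Polynomial.eval_neg, Polynomial.eval_X,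
      neg_neg]
    congr 2
    ring
  rw [heq]
  exact (aux_tendsto_real _ _).comp tendsto_neg_atBot_atTop

lemma aux_tendsto_complex (P : ℝ[X]) (a : ℂ) {l : Filter ℝ}
    (hl : Tendsto (fun y : ℝ => P.eval y * Real.exp (-(y - a.re) ^ 2)) l (nhds 0)) :
    Tendsto (fun y : ℝ => ((P.eval y : ℝ) : ℂ) * Complex.exp (-((y:ℂ) - a) ^ 2)) l (nhds 0) := by
  rw [tendsto_zero_iff_norm_tendsto_zero]
  have heq : (fun y : ℝ => ‖((P.eval y : ℝ):ℂ) * Complex.exp (-((y:ℂ) - a) ^ 2)‖)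
      = fun y : ℝ => |P.eval y * Real.exp (-(y - a.re) ^ 2)| * Real.exp (a.im ^ 2) := by
    funext y
    rw [aux_norm, abs_mul, abs_of_pos (Real.exp_pos _)]
    ring
  rw [heq]
  simpa using hl.abs.mul_const (Real.exp (a.im ^ 2))

lemma aux_gaussian (a : ℂ) :
    ∫ y : ℝ, Complex.exp (-((y:ℂ) - a) ^ 2) = (Real.sqrt Real.pi : ℂ) := by
  have ha : a = (a.re : ℂ) + a.im * Complex.I := (Complex.re_add_im a).symm
  have h0 := GaussianFourier.integral_cexp_neg_mul_sq_add_real_mul_I (b := 1) (by norm_num) (-a.im)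
  have h1 : ∫ y : ℝ, Complex.exp (-((y:ℂ) - a) ^ 2)
      = ∫ y : ℝ, Complex.exp (-1 * (((y - a.re : ℝ) : ℂ) + (-a.im : ℝ) * Complex.I) ^ 2) := by
    congr 1
    funext y
    congr 1
    push_cast
    linear_combination (2*(y:ℂ) - (a.re : ℂ) - (a.im : ℂ) * Complex.I - a) * ha
  rw [h1, integral_sub_right_eq_self
    (fun x : ℝ => Complex.exp (-1 * ((x:ℂ) + (-a.im : ℝ) * Complex.I) ^ 2)) a.re, h0]
  rw [div_one, Real.sqrt_eq_rpow,
    show (1/2 : ℂ) = ((1/2 : ℝ) : ℂ) by norm_num, ← Complex.ofReal_cpow Real.pi_pos.le]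

lemma hermite_gauss (d : ℕ) (a : ℂ) :
    ∫ y : ℝ, (((hermiteP d).eval y : ℝ) : ℂ) * Complex.exp (-((y:ℂ) - a) ^ 2)
      = (Real.sqrt Real.pi : ℂ) * (2 * a) ^ d := by
  induction d generalizing a with
  | zero => simp [hermiteP, aux_gaussian a]
  | succ d ih =>
    set H := hermiteP d with hH
    set Q : ℝ[X] := derivative H - 2 * X * H with hQ
    set E : ℝ → ℂ := fun y => Complex.exp (-((y:ℂ) - a) ^ 2) with hE
    set F' : ℝ → ℂ := fun y => (((derivative H).eval y : ℝ) : ℂ) * E y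
        + ((H.eval y : ℝ) : ℂ) * (-(2 * ((y:ℂ) - a)) * E y) with hF'
    have hderiv : ∀ y : ℝ, HasDerivAt (fun y : ℝ => ((H.eval y : ℝ) : ℂ) * E y) (F' y) y := by
      intro y
      have h1 : HasDerivAt (fun y : ℝ => ((H.eval y : ℝ) : ℂ))
          ((((derivative H).eval y : ℝ) : ℂ)) y := (H.hasDerivAt y).ofReal_comp
      have h2 : HasDerivAt (fun y : ℝ => Complex.exp (-((y:ℂ) - a) ^ 2))
          (-(2 * ((y:ℂ) - a)) * Complex.exp (-((y:ℂ) - a) ^ 2)) y := by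
        have hz : HasDerivAt (fun z : ℂ => Complex.exp (-(z - a) ^ 2))
            (-(2 * ((y:ℂ) - a)) * Complex.exp (-((y:ℂ) - a) ^ 2)) (y : ℂ) := by
          have hp : HasDerivAt (fun z : ℂ => -(z - a) ^ 2) (-(2 * ((y:ℂ) - a))) (y:ℂ) := by
            have := (((hasDerivAt_id (y:ℂ)).sub_const a).pow 2).neg
            rw [show (-(fun x : ℂ => id x - a) ^ 2) = (fun z : ℂ => -(z - a) ^ 2) from by
              funext z; simp] at this
            simpa using this
          simpa [mul_comm] using hp.cexp
        exact hz.comp_ofReal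
      exact h1.mul h2
    have hint : Integrable F' := by
      have heq : F' = fun y : ℝ => ((Q.eval y : ℝ) : ℂ) * E y
          + (2 * a) * (((H.eval y : ℝ) : ℂ) * E y) := by
        funext y
        simp only [hF', hQ, hE, Polynomial.eval_sub, Polynomial.eval_mul, Polynomial.eval_X,
          Polynomial.eval_ofNat]
        push_cast
        ring
      rw [heq]
      exact (aux_integrable Q a).add ((aux_integrable H a).const_mul _)
    have htop : Tendsto (fun y : ℝ => ((H.eval y : ℝ) : ℂ) * E y) atTop (nhds 0) :=
      aux_tendsto_complex H a (aux_tendsto_real H a.re)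
    have hbot : Tendsto (fun y : ℝ => ((H.eval y : ℝ) : ℂ) * E y) atBot (nhds 0) :=
      aux_tendsto_complex H a (aux_tendsto_real_bot H a.re)
    have hzero : ∫ y : ℝ, F' y = 0 := by
      simpa using integral_of_hasDerivAt_of_tendsto hderiv hint hbot htop
    have hmain : (fun y : ℝ => (((hermiteP (d+1)).eval y : ℝ) : ℂ) * E y)
        = fun y : ℝ => (2 * a) * (((H.eval y : ℝ) : ℂ) * E y) - F' y := by
      funext y
      show (((2 * X * H - derivative H).eval y : ℝ) : ℂ) * E y = _
      simp only [hF', Polynomial.eval_sub, Polynomial.eval_mul, Polynomial.eval_X,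
        Polynomial.eval_ofNat]
      push_cast
      ring
    calc ∫ y : ℝ, (((hermiteP (d+1)).eval y : ℝ) : ℂ) * E y
        = ∫ y : ℝ, ((2 * a) * (((H.eval y : ℝ) : ℂ) * E y) - F' y) := by rw [hmain]
      _ = (2 * a) * (∫ y : ℝ, ((H.eval y : ℝ) : ℂ) * E y) - ∫ y : ℝ, F' y := by
          rw [integral_sub ((aux_integrable H a).const_mul _) hint, integral_const_mul]
      _ = (Real.sqrt Real.pi : ℂ) * (2 * a) ^ (d + 1) := by
          rw [hzero, ih a]
          ring

/-- Partial Fourier transform (in `y`) of `H_d(√π(x+y)) e^{-πx² - πy²}`: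
`∫ H_d(√π(x+y)) e^{-πx²-πy²} e^{2πi y y'} dy
  = i^d 2^d π^{d/2} conj(ix + y')^d e^{-πx² - π(y')²}`. -/
theorem hermite_partial_fourier (d : ℕ) (x y' : ℝ) :
    (∫ y : ℝ, ((hermiteP d).eval (Real.sqrt Real.pi * (x + y))
          * Real.exp (-Real.pi * x ^ 2 - Real.pi * y ^ 2) : ℂ)
        * Complex.exp (2 * Real.pi * Complex.I * y * y')) =
      Complex.I ^ d * 2 ^ d * (Real.sqrt Real.pi : ℂ) ^ d
        * (starRingEnd ℂ (Complex.I * x + y')) ^ d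
        * Real.exp (-Real.pi * x ^ 2 - Real.pi * y' ^ 2) := by
  set s : ℝ := Real.sqrt Real.pi with hs
  have hspos : 0 < s := Real.sqrt_pos.mpr Real.pi_pos
  have hsne : (s : ℂ) ≠ 0 := by
    simpa using ne_of_gt hspos
  have hs2 : (s : ℂ) ^ 2 = (Real.pi : ℂ) := by
    rw [← Complex.ofReal_pow, Real.sq_sqrt Real.pi_pos.le]
  set a : ℂ := (s : ℂ) * x + (s : ℂ) * y' * Complex.I with haa
  set g : ℝ → ℂ := fun z => (((hermiteP d).eval z : ℝ) : ℂ) * Complex.exp (-((z:ℂ) - a) ^ 2)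
    with hg
  set C : ℂ := ((Real.exp (-Real.pi * x ^ 2 - Real.pi * y' ^ 2) : ℝ) : ℂ) with hC
  have hpoint : ∀ y : ℝ, ((hermiteP d).eval (s * (x + y))
        * Real.exp (-Real.pi * x ^ 2 - Real.pi * y ^ 2) : ℂ)
        * Complex.exp (2 * Real.pi * Complex.I * y * y') = C * g (s * (y + x)) := by
    intro y
    have h1 : ((hermiteP d).eval (s * (x + y))
          * Real.exp (-Real.pi * x ^ 2 - Real.pi * y ^ 2) : ℂ)
          * Complex.exp (2 * Real.pi * Complex.I * y * y')
        = (((hermiteP d).eval (s * (x + y)) : ℝ) : ℂ)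
          * Complex.exp (((-Real.pi * x ^ 2 - Real.pi * y ^ 2 : ℝ) : ℂ)
            + 2 * Real.pi * Complex.I * y * y') := by
      rw [Complex.ofReal_exp, mul_assoc, ← Complex.exp_add]
    have h2 : C * g (s * (y + x))
        = (((hermiteP d).eval (s * (x + y)) : ℝ) : ℂ)
          * Complex.exp (((-Real.pi * x ^ 2 - Real.pi * y' ^ 2 : ℝ) : ℂ)
            + -((((s * (y + x) : ℝ)) : ℂ) - a) ^ 2) := by
      rw [hC, hg, Complex.ofReal_exp, Complex.exp_add, show s * (y + x) = s * (x + y) by ring]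
      ring
    rw [h1, h2]
    congr 2
    push_cast
    rw [haa]
    linear_combination ((y:ℂ)^2 - 2*(y:ℂ)*(y':ℂ)*Complex.I + (y':ℂ)^2*Complex.I^2) * hs2
      + (Real.pi : ℂ) * (y':ℂ)^2 * Complex.I_sq
  calc (∫ y : ℝ, ((hermiteP d).eval (s * (x + y))
          * Real.exp (-Real.pi * x ^ 2 - Real.pi * y ^ 2) : ℂ)
        * Complex.exp (2 * Real.pi * Complex.I * y * y'))
      = ∫ y : ℝ, C * g (s * (y + x)) := integral_congr_ae (ae_of_all _ hpoint)
    _ = C * ∫ y : ℝ, g (s * (y + x)) := integral_const_mul _ _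
    _ = C * ∫ u : ℝ, g (s * u) := by
        rw [integral_add_right_eq_self (fun u : ℝ => g (s * u)) x]
    _ = C * ((|s⁻¹| : ℝ) • ∫ z : ℝ, g z) := by
        rw [MeasureTheory.Measure.integral_comp_mul_left g s]
    _ = C * (((s⁻¹ : ℝ) : ℂ) * ((s : ℂ) * (2 * a) ^ d)) := by
        rw [hg, hermite_gauss d a, abs_of_pos (inv_pos.mpr hspos), Complex.real_smul, ← hs]
    _ = Complex.I ^ d * 2 ^ d * (s : ℂ) ^ d
        * (starRingEnd ℂ (Complex.I * x + y')) ^ d * C := by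
        have hbase : 2 * a = Complex.I * 2 * (s : ℂ) * (starRingEnd ℂ) (Complex.I * x + y') := by
          rw [map_add, map_mul, Complex.conj_I, Complex.conj_ofReal, Complex.conj_ofReal, haa]
          linear_combination (2 * (s:ℂ) * (x:ℂ)) * Complex.I_sq
        rw [Complex.ofReal_inv, inv_mul_cancel_left₀ hsne, hbase, mul_pow, mul_pow, mul_pow]
        ring
end

section
/- Consider the action of Γ₀(p) on pairs (v,w) ∈ ℤ² × ℤ² by ρ_γ(v,w) = (γv, γ^{-T}w), and let L ⊂ ℤ² be the set of (v₁,v₂) with gcd(v₁,p)=1 and v₂ ∈ pℤ. Then for every n ≥ 1, a complete set of representatives for the Γ₀(p)-orbits on {(v,w) ∈ L × ℤ² : vᵀw = n} is given by the pairs ((d,0)ᵀ, (d', b)ᵀ) with dd' = n, d > 0, gcd(d,p) = 1, and 0 ≤ b ≤ d'-1. -/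
/-!
Every `v ∈ L` with `vᵀw = n ≠ 0` is `d • u` with `d = gcd(v₀, v₁) > 0` and `u` primitive, and
`u` is the first column of some `γ ∈ SL₂(ℤ)`; since `p ∣ d u₁` and `gcd(d, p) = 1`, this `γ`
lies in `Γ₀(p)`. Then `γ(d, 0) = v` and `γᵀw = (uᵀw, b₀)`, and right multiplication of `γ` by
the shear `[[1, k], [0, 1]]` fixes the first column while replacing `b₀` by `b₀ + k uᵀw`, which
can be reduced into `[0, uᵀw)`. Conversely, an element of `SL₂(ℤ)` mapping `(d, 0)` to `(e, 0)`
with `d, e > 0` is such a shear, which acts on `(d', b)` by `b ↦ b + t d'`, so the reduced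
representatives cannot move.
-/

open Matrix

theorem Matrix.transpose_inv_mulVec_eq_iff {m R : Type*} [Fintype m] [DecidableEq m]
    [CommRing R] {γ : Matrix m m R} (hγ : IsUnit γ.det) {x w : m → R} :
    γ⁻¹ᵀ *ᵥ x = w ↔ γᵀ *ᵥ w = x := by
  have hγT : IsUnit γᵀ.det := by rwa [det_transpose]
  rw [transpose_nonsing_inv]
  constructor
  · rintro rfl
    rw [mulVec_mulVec, mul_nonsing_inv _ hγT, one_mulVec]
  · rintro rfl
    rw [mulVec_mulVec, nonsing_inv_mul _ hγT, one_mulVec]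

theorem Int.eq_of_add_mul_eq {a b m t : ℤ} (ha₀ : 0 ≤ a) (ha : a < m) (hb₀ : 0 ≤ b)
    (hb : b < m) (h : a + t * m = b) : a = b := by
  rw [← Int.emod_eq_of_lt ha₀ ha, ← Int.emod_eq_of_lt hb₀ hb, ← h,
    Int.add_mul_emod_self_right]

theorem exists_pos_smul_isCoprime_of_ne_zero {v : Fin 2 → ℤ} (hv : v ≠ 0) :
    ∃ d : ℤ, 0 < d ∧ ∃ u : Fin 2 → ℤ, IsCoprime (u 0) (u 1) ∧ v = d • u := by
  have hgcd : 0 < Int.gcd (v 0) (v 1) := by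
    rw [Int.gcd_pos_iff]
    by_contra! h
    exact hv (funext fun i => by fin_cases i <;> simp [h.1, h.2])
  obtain ⟨g, u₀, u₁, hg, hu, hv₀, hv₁⟩ := Int.exists_gcd_one' hgcd
  refine ⟨g, by exact_mod_cast hg, ![u₀, u₁], Int.isCoprime_iff_gcd_eq_one.mpr hu, ?_⟩
  funext i
  fin_cases i <;> simp [hv₀, hv₁, mul_comm]

theorem exists_det_eq_one_mulVec_eq_and_transpose_mulVec_eq {u w : Fin 2 → ℤ}
    (hu : IsCoprime (u 0) (u 1)) (hw : 0 < u ⬝ᵥ w) :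
    ∃ γ : Matrix (Fin 2) (Fin 2) ℤ, γ.det = 1 ∧ γ *ᵥ ![1, 0] = u ∧
      ∃ b, 0 ≤ b ∧ b < u ⬝ᵥ w ∧ γᵀ *ᵥ w = ![u ⬝ᵥ w, b] := by
  obtain ⟨x, y, hxy⟩ := hu
  set b₀ := -y * w 0 + x * w 1
  set k := -(b₀ / u ⬝ᵥ w)
  -- `[[u₀, -y], [u₁, x]] ∈ SL₂(ℤ)`, times the shear `[[1, k], [0, 1]]`
  refine ⟨!![u 0, -y + k * u 0; u 1, x + k * u 1], ?_, ?_, b₀ % u ⬝ᵥ w,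
    Int.emod_nonneg _ hw.ne', Int.emod_lt_of_pos _ hw, ?_⟩
  · rw [det_fin_two_of]
    linear_combination hxy
  · funext i
    fin_cases i <;> simp
  · funext i
    fin_cases i
    · simp [mulVec, dotProduct, Fin.sum_univ_two]
    · simp [mulVec, dotProduct, Fin.sum_univ_two, Int.emod_def, b₀, k]
      ring

theorem exists_eq_shear_of_mulVec_eq {γ : Matrix (Fin 2) (Fin 2) ℤ} (hγ : γ.det = 1) {d e : ℤ}
    (hd : 0 < d) (he : 0 < e) (h : γ *ᵥ ![d, 0] = ![e, 0]) :
    ∃ t, γ = !![1, t; 0, 1] := by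
  have h₀ : γ 0 0 * d = e := by simpa using congrFun h 0
  have h₁ : γ 1 0 * d = 0 := by simpa using congrFun h 1
  have h₁₀ : γ 1 0 = 0 := (mul_eq_zero.mp h₁).resolve_right hd.ne'
  have hdiag : γ 0 0 * γ 1 1 = 1 := by rw [← hγ, det_fin_two, h₁₀]; ring
  have h₀₀ : γ 0 0 = 1 :=
    Int.eq_one_of_mul_eq_one_right (pos_of_mul_pos_left (h₀ ▸ he) hd.le).le hdiag
  have h₁₁ : γ 1 1 = 1 := by rwa [h₀₀, one_mul] at hdiag
  refine ⟨γ 0 1, ?_⟩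
  ext i j
  fin_cases i <;> fin_cases j <;> simp [h₀₀, h₁₀, h₁₁]

theorem gamma0_orbit_representatives_general (p : ℤ) (n : ℤ) (hn : 1 ≤ n) :
    let Γ₀ : Set (Matrix (Fin 2) (Fin 2) ℤ) := {γ | γ.det = 1 ∧ p ∣ γ 1 0}
    let L : Set (Fin 2 → ℤ) := {v | IsCoprime (v 0) p ∧ p ∣ v 1}
    (∀ v ∈ L, ∀ w : Fin 2 → ℤ, v ⬝ᵥ w = n →
      ∃ d d' b : ℤ, d * d' = n ∧ 0 < d ∧ IsCoprime d p ∧ 0 ≤ b ∧ b ≤ d' - 1 ∧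
        ∃ γ ∈ Γ₀, γ.mulVec ![d, 0] = v ∧ (γ⁻¹)ᵀ.mulVec ![d', b] = w) ∧
    (∀ d d' b e e' c : ℤ,
      d * d' = n → 0 < d → IsCoprime d p → 0 ≤ b → b ≤ d' - 1 →
      e * e' = n → 0 < e → IsCoprime e p → 0 ≤ c → c ≤ e' - 1 →
      (∃ γ ∈ Γ₀, γ.mulVec ![d, 0] = ![e, 0] ∧
        (γ⁻¹)ᵀ.mulVec ![d', b] = ![e', c]) →
      d = e ∧ d' = e' ∧ b = c) := by
  refine ⟨?_, ?_⟩
  · rintro v ⟨hv₀, hv₁⟩ w rfl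
    obtain ⟨d, hd, u, hu, rfl⟩ :=
      exists_pos_smul_isCoprime_of_ne_zero (v := v) (by rintro rfl; simp at hn)
    rw [smul_dotProduct, smul_eq_mul] at hn ⊢
    have hd' : 0 < u ⬝ᵥ w := pos_of_mul_pos_right (zero_lt_one.trans_le hn) hd.le
    obtain ⟨γ, hγ, hcol, b, hb₀, hb, hγw⟩ :=
      exists_det_eq_one_mulVec_eq_and_transpose_mulVec_eq hu hd'
    have hdp : IsCoprime d p := hv₀.of_mul_left_left
    have hγ₁₀ : γ 1 0 = u 1 := by simpa using congrFun hcol 1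
    refine ⟨d, u ⬝ᵥ w, b, rfl, hd, hdp, hb₀, by omega, γ,
      ⟨hγ, hγ₁₀ ▸ hdp.symm.dvd_of_dvd_mul_left hv₁⟩, ?_, ?_⟩
    · rw [show ![d, 0] = d • ![(1 : ℤ), 0] by simp, mulVec_smul, hcol]
    · exact (transpose_inv_mulVec_eq_iff (by simp [hγ])).mpr hγw
  · rintro d d' b e e' c - hd - hb₀ hb - he - hc₀ hc ⟨γ, ⟨hγ, -⟩, hγv, hγw⟩
    obtain ⟨t, rfl⟩ := exists_eq_shear_of_mulVec_eq hγ hd he hγv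
    rw [transpose_inv_mulVec_eq_iff (by simp [hγ])] at hγw
    have hde : d = e := by simpa using congrFun hγv 0
    have hd' : e' = d' := by simpa using congrFun hγw 0
    have hshift : c + t * e' = b := by simpa [add_comm] using congrFun hγw 1
    subst hd'
    exact ⟨hde, rfl, (Int.eq_of_add_mul_eq hc₀ (by omega) hb₀ (by omega) hshift).symm⟩

/-- A complete set of representatives for the `Γ₀(p)`-orbits (under
`ρ_γ(v,w) = (γv, γ^{-T}w)`) on pairs `(v,w) ∈ L × ℤ²` with `vᵀw = n` is given
by the pairs `((d,0), (d',b))` with `dd' = n`, `d > 0`, `gcd(d,p) = 1` and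
`0 ≤ b ≤ d'-1`. -/
theorem gamma0_orbit_representatives (p : ℤ) (hp : 0 < p) (n : ℤ) (hn : 1 ≤ n) :
    let Γ₀ : Set (Matrix (Fin 2) (Fin 2) ℤ) := {γ | γ.det = 1 ∧ p ∣ γ 1 0}
    let L : Set (Fin 2 → ℤ) := {v | IsCoprime (v 0) p ∧ p ∣ v 1}
    (∀ v ∈ L, ∀ w : Fin 2 → ℤ, v ⬝ᵥ w = n →
      ∃ d d' b : ℤ, d * d' = n ∧ 0 < d ∧ IsCoprime d p ∧ 0 ≤ b ∧ b ≤ d' - 1 ∧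
        ∃ γ ∈ Γ₀, γ.mulVec ![d, 0] = v ∧ (γ⁻¹)ᵀ.mulVec ![d', b] = w) ∧
    (∀ d d' b e e' c : ℤ,
      d * d' = n → 0 < d → IsCoprime d p → 0 ≤ b → b ≤ d' - 1 →
      e * e' = n → 0 < e → IsCoprime e p → 0 ≤ c → c ≤ e' - 1 →
      (∃ γ ∈ Γ₀, γ.mulVec ![d, 0] = ![e, 0] ∧
        (γ⁻¹)ᵀ.mulVec ![d', b] = ![e', c]) →
      d = e ∧ d' = e' ∧ b = c) :=
  gamma0_orbit_representatives_general p n hn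
end
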